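/- Let G = ⋃_{j ∈ J} G_j be a directed union of Gabriel filters on a ring A such that each associated Giraud subcategory X_{G_j} is closed under direct limits. Then for every left A-module M, the G-closed reflection M_G is canonically isomorphic to the direct limit colim_{j ∈ J} M_{G_j} of the G_j-closed reflections. -/
import Mathlib


section
variable (A : Type) [Ring A]

/-- The left ideal `(I : x) = {a : A | a * x ∈ I}`. -/
def idealColon (I : Ideal A) (x : A) : Ideal A :=
  Submodule.comap (LinearMap.toSpanSingleton A A x) I

/-- `G` is a Gabriel filter of left ideals of `A`. -/
def IsGabrielFilter (G : Set (Ideal A)) : Prop :=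
  (⊤ : Ideal A) ∈ G ∧
  (∀ I J : Ideal A, I ∈ G → I ≤ J → J ∈ G) ∧
  (∀ I J : Ideal A, I ∈ G → J ∈ G → I ⊓ J ∈ G) ∧
  (∀ I ∈ G, ∀ x : A, idealColon A I x ∈ G) ∧
  (∀ (J : Ideal A), (∃ I ∈ G, ∀ x ∈ I, idealColon A J x ∈ G) → J ∈ G)

/-- `M` is `G`-torsion: the annihilator of every element belongs to `G`. -/
def IsGTorsion (G : Set (Ideal A)) (M : Type) [AddCommGroup M] [Module A M] : Prop :=
  ∀ m : M, LinearMap.ker (LinearMap.toSpanSingleton A M m) ∈ G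

/-- `M` is `G`-closed: `Hom_A(A/I, M) = 0 = Ext¹_A(A/I, M)` for all `I ∈ G`, where the
vanishing of `Ext¹` is expressed by the splitting of all extensions of `A/I` by `M`. -/
def IsGClosed (G : Set (Ideal A)) (M : Type) [AddCommGroup M] [Module A M] : Prop :=
  ∀ I ∈ G,
    (∀ f : (A ⧸ I) →ₗ[A] M, f = 0) ∧
    (∀ (E : Type) [AddCommGroup E] [Module A E] (i : M →ₗ[A] E) (p : E →ₗ[A] (A ⧸ I)),
      Function.Injective i → Function.Surjective p →
      LinearMap.ker p = LinearMap.range i →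
      ∃ s : (A ⧸ I) →ₗ[A] E, p ∘ₗ s = LinearMap.id)

/-- The Giraud subcategory `X_G` is closed under direct limits. -/
def GClosedUnderDirectLimits (G : Set (Ideal A)) : Prop :=
  ∀ (K : Type) [Preorder K] [IsDirected K (· ≤ ·)] [DecidableEq K] [Nonempty K]
    (F : K → Type) [∀ k, AddCommGroup (F k)] [∀ k, Module A (F k)]
    (f : ∀ i j : K, i ≤ j → F i →ₗ[A] F j) [DirectedSystem F (fun i j h => f i j h)],
    (∀ k, IsGClosed A G (F k)) → IsGClosed A G (Module.DirectLimit F f)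


lemma tf_of_closed {G : Set (Ideal A)} {X : Type} [AddCommGroup X] [Module A X]
    (hX : ∀ I ∈ G, ∀ f : (A ⧸ I) →ₗ[A] X, f = 0)
    {x : X} (hx : LinearMap.ker (LinearMap.toSpanSingleton A X x) ∈ G) : x = 0 := by
  have h0 := hX _ hx (Submodule.liftQ _ (LinearMap.toSpanSingleton A X x) le_rfl)
  have := LinearMap.congr_fun h0 (Submodule.Quotient.mk 1)
  simpa using this

/-- A functional total graph submodule yields a linear map. -/


lemma graph_fun {N X : Type} [AddCommGroup N] [Module A N] [AddCommGroup X] [Module A X]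
    (Γ : Submodule A (N × X))
    (hfun : ∀ x : X, ((0 : N), x) ∈ Γ → x = 0)
    (htot : ∀ n : N, ∃ x, (n, x) ∈ Γ) :
    ∃ g : N →ₗ[A] X, ∀ n, (n, g n) ∈ Γ := by
  classical
  have huniq : ∀ {n : N} {x x' : X}, (n, x) ∈ Γ → (n, x') ∈ Γ → x = x' := by
    intro n x x' h1 h2
    have : ((0 : N), x - x') ∈ Γ := by
      have := Γ.sub_mem h1 h2
      simpa using this
    exact sub_eq_zero.mp (hfun _ this)
  choose g hg using htot
  refine ⟨⟨⟨g, ?_⟩, ?_⟩, hg⟩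
  · intro n n'
    exact huniq (hg (n + n')) (by simpa using Γ.add_mem (hg n) (hg n'))
  · intro a n
    exact huniq (hg (a • n)) (by simpa using Γ.smul_mem a (hg n))

/-- Uniqueness of extensions along a map with `G`-torsion cokernel, into a torsion-free module. -/


lemma unique_hom {G : Set (Ideal A)} (hup : ∀ I J : Ideal A, I ∈ G → I ≤ J → J ∈ G)
    {M N X : Type} [AddCommGroup M] [Module A M] [AddCommGroup N] [Module A N]
    [AddCommGroup X] [Module A X]
    (ψ : M →ₗ[A] N) (htc : IsGTorsion A G (N ⧸ LinearMap.range ψ))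
    (hXtf : ∀ x : X, LinearMap.ker (LinearMap.toSpanSingleton A X x) ∈ G → x = 0)
    {g g' : N →ₗ[A] X} (h : g ∘ₗ ψ = g' ∘ₗ ψ) : g = g' := by
  ext n
  rw [← sub_eq_zero]
  refine hXtf _ (hup _ _ (htc (Submodule.Quotient.mk n)) ?_)
  intro a ha
  rw [LinearMap.mem_ker, LinearMap.toSpanSingleton_apply] at ha ⊢
  rw [← Submodule.Quotient.mk_smul, Submodule.Quotient.mk_eq_zero] at ha
  obtain ⟨m, hm⟩ := ha
  have : g (a • n) = g' (a • n) := by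
    rw [← hm]; exact LinearMap.congr_fun h m
  rw [smul_sub, ← map_smul, ← map_smul, this, sub_self]

/-- Existence of extensions along a map with `G`-torsion kernel and cokernel, into a
`G`-closed module. -/


lemma extend_hom {G : Set (Ideal A)} (hup : ∀ I J : Ideal A, I ∈ G → I ≤ J → J ∈ G)
    {M N X : Type} [AddCommGroup M] [Module A M] [AddCommGroup N] [Module A N]
    [AddCommGroup X] [Module A X]
    (ψ : M →ₗ[A] N)
    (htk : IsGTorsion A G (LinearMap.ker ψ))
    (htc : IsGTorsion A G (N ⧸ LinearMap.range ψ))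
    (hX : IsGClosed A G X) (f : M →ₗ[A] X) :
    ∃ g : N →ₗ[A] X, g ∘ₗ ψ = f := by
  classical
  have hXtf : ∀ x : X, LinearMap.ker (LinearMap.toSpanSingleton A X x) ∈ G → x = 0 :=
    fun x hx => tf_of_closed A (fun I hI => (hX I hI).1) hx
  set Γ0 : Submodule A (N × X) := LinearMap.range (ψ.prod f) with hΓ0def
  set S : Set (Submodule A (N × X)) :=
    {Γ | Γ0 ≤ Γ ∧ ∀ x : X, ((0 : N), x) ∈ Γ → x = 0} with hSdef
  have hΓ0S : Γ0 ∈ S := by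
    refine ⟨le_rfl, ?_⟩
    intro x hx
    obtain ⟨m, hm⟩ := hx
    have hm1 : ψ m = 0 := by simpa using congrArg Prod.fst hm
    have hm2 : f m = x := by simpa using congrArg Prod.snd hm
    subst hm2
    refine hXtf _ (hup _ _ (htk ⟨m, hm1⟩) ?_)
    intro a ha
    rw [LinearMap.mem_ker, LinearMap.toSpanSingleton_apply] at ha ⊢
    have ham : a • m = 0 := by
      have := congrArg (Subtype.val) ha
      simpa using this
    rw [← map_smul, ham, map_zero]
  have hchaincond : ∀ c ⊆ S, IsChain (· ≤ ·) c → ∀ y ∈ c, ∃ ub ∈ S, ∀ z ∈ c, z ≤ ub := by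
    intro c hcS hchain y hy
    refine ⟨sSup c, ⟨?_, ?_⟩, fun z hz => le_sSup hz⟩
    · exact le_trans (hcS hy).1 (le_sSup hy)
    · intro x hx
      obtain ⟨Γ', hΓ'c, hxΓ'⟩ :=
        (Submodule.mem_sSup_of_directed ⟨y, hy⟩ hchain.directedOn).mp hx
      exact (hcS hΓ'c).2 x hxΓ'
  obtain ⟨Γ, hΓ0Γ, hΓmax⟩ := zorn_le_nonempty₀ S hchaincond Γ0 hΓ0S
  obtain ⟨hΓ0leΓ, hΓfun⟩ := hΓmax.prop
  -- totality of Γ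
  have htot : ∀ n : N, ∃ x, (n, x) ∈ Γ := by
    intro n
    by_contra hn
    push_neg at hn
    -- the ideal I = (dom Γ : n)
    set I : Ideal A :=
      Submodule.comap (LinearMap.toSpanSingleton A N n)
        (Γ.map (LinearMap.fst A N X)) with hIdef
    have hImem : ∀ a : A, a ∈ I ↔ ∃ x, (a • n, x) ∈ Γ := by
      intro a
      constructor
      · rintro ⟨⟨n', x⟩, hmem, hfst⟩
        simp only [LinearMap.fst_apply] at hfst
        exact ⟨x, by rwa [LinearMap.toSpanSingleton_apply] at hfst ▸ hmem⟩
      · rintro ⟨x, hx⟩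
        exact ⟨(a • n, x), hx, by simp [LinearMap.toSpanSingleton_apply]⟩
    have hIG : I ∈ G := by
      refine hup _ _ (htc (Submodule.Quotient.mk n)) ?_
      intro a ha
      rw [LinearMap.mem_ker, LinearMap.toSpanSingleton_apply,
        ← Submodule.Quotient.mk_smul, Submodule.Quotient.mk_eq_zero] at ha
      obtain ⟨m, hm⟩ := ha
      rw [hImem]
      exact ⟨f m, hΓ0leΓ ⟨m, by show (ψ m, f m) = (a • n, f m); rw [hm]⟩⟩
    -- the linear map h : I → X
    obtain ⟨h, hh⟩ := graph_fun A
      (Γ.comap ((((LinearMap.toSpanSingleton A N n).comp I.subtype)).prodMap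
        (LinearMap.id : X →ₗ[A] X)))
      (by
        intro x hx
        refine hΓfun x ?_
        simpa using hx)
      (by
        intro a
        obtain ⟨x, hx⟩ := (hImem (a : A)).mp a.2
        exact ⟨x, by simpa [LinearMap.toSpanSingleton_apply] using hx⟩)
    have hh' : ∀ a : I, ((a : A) • n, h a) ∈ Γ := by
      intro a
      have := hh a
      simpa [LinearMap.toSpanSingleton_apply] using this
    -- the pushout extension
    set w : I →ₗ[A] X × A := h.prod I.subtype with hwdef
    set W : Submodule A (X × A) := LinearMap.range w with hWdef
    set i : X →ₗ[A] (X × A) ⧸ W := W.mkQ ∘ₗ LinearMap.inl A X A with hidef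
    have hWker : W ≤ LinearMap.ker ((Submodule.mkQ I) ∘ₗ LinearMap.snd A X A) := by
      rintro ⟨x, a⟩ ⟨b, hb⟩
      rw [LinearMap.mem_ker]
      simp only [LinearMap.coe_comp, Function.comp_apply, LinearMap.snd_apply,
        Submodule.mkQ_apply, Submodule.Quotient.mk_eq_zero]
      have : (b : A) = a := congrArg Prod.snd hb
      rw [← this]; exact b.2
    set p : (X × A) ⧸ W →ₗ[A] (A ⧸ I) :=
      Submodule.liftQ W ((Submodule.mkQ I) ∘ₗ LinearMap.snd A X A) hWker with hpdef
    have hp_mk : ∀ (x : X) (a : A),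
        p (Submodule.Quotient.mk (x, a)) = Submodule.Quotient.mk a := by
      intro x a; rfl
    have hiinj : Function.Injective i := by
      intro x x' hxx'
      have : ((x - x' : X), (0 : A)) ∈ W := by
        have h2 : (Submodule.Quotient.mk ((x : X), (0 : A)) : (X × A) ⧸ W) =
            Submodule.Quotient.mk ((x' : X), (0 : A)) := hxx'
        have h3 := (Submodule.Quotient.eq W).mp h2
        simpa [Prod.mk_sub_mk] using h3
      obtain ⟨b, hb⟩ := this
      have hb2 : (b : A) = 0 := congrArg Prod.snd hb
      have hb0 : b = 0 := Subtype.ext hb2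
      have hb1 : h b = x - x' := congrArg Prod.fst hb
      rw [hb0, map_zero] at hb1
      exact sub_eq_zero.mp hb1.symm
    have hpsurj : Function.Surjective p := by
      intro q
      obtain ⟨a, rfl⟩ := Submodule.Quotient.mk_surjective I q
      exact ⟨Submodule.Quotient.mk ((0 : X), a), hp_mk 0 a⟩
    have hkerp : LinearMap.ker p = LinearMap.range i := by
      ext e
      constructor
      · intro he
        obtain ⟨⟨x, a⟩, rfl⟩ := Submodule.Quotient.mk_surjective W e
        rw [LinearMap.mem_ker, hp_mk, Submodule.Quotient.mk_eq_zero] at he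
        refine ⟨x - h ⟨a, he⟩, ?_⟩
        show (Submodule.Quotient.mk (x - h ⟨a, he⟩, (0 : A)) : (X × A) ⧸ W) =
          Submodule.Quotient.mk (x, a)
        rw [Submodule.Quotient.eq]
        refine ⟨-⟨a, he⟩, ?_⟩
        rw [map_neg]
        show -(h ⟨a, he⟩, (a : A)) = _
        apply Prod.ext <;> simp
      · rintro ⟨x, rfl⟩
        rw [LinearMap.mem_ker, hidef]
        simp only [LinearMap.coe_comp, Function.comp_apply, LinearMap.inl_apply,
          Submodule.mkQ_apply]
        rw [hp_mk, Submodule.Quotient.mk_eq_zero]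
        exact I.zero_mem
    obtain ⟨s, hs⟩ := (hX I hIG).2 _ i p hiinj hpsurj hkerp
    obtain ⟨⟨x0, a0⟩, hx0a0⟩ := Submodule.Quotient.mk_surjective W (s (Submodule.Quotient.mk 1))
    have ha0 : a0 - 1 ∈ I := by
      have := LinearMap.congr_fun hs (Submodule.Quotient.mk (1 : A))
      rw [LinearMap.comp_apply, ← hx0a0, hp_mk, LinearMap.id_apply] at this
      rwa [Submodule.Quotient.eq] at this
    have key : ∀ a : I, (a : A) * a0 ∈ I ∧
        ∀ (hmem : (a : A) * a0 ∈ I), h ⟨(a : A) * a0, hmem⟩ = (a : A) • x0 := by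
      intro a
      have h1 : (a : A) • s (Submodule.Quotient.mk (1 : A)) = 0 := by
        rw [← map_smul]
        have : (a : A) • (Submodule.Quotient.mk (1 : A) : A ⧸ I) = 0 := by
          rw [← Submodule.Quotient.mk_smul, smul_eq_mul, mul_one,
            Submodule.Quotient.mk_eq_zero]
          exact a.2
        rw [this, map_zero]
      rw [← hx0a0, ← Submodule.Quotient.mk_smul, Submodule.Quotient.mk_eq_zero] at h1
      obtain ⟨b, hb⟩ := h1
      have hb1 : h b = (a : A) • x0 := congrArg Prod.fst hb
      have hb2 : (b : A) = (a : A) • a0 := congrArg Prod.snd hb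
      rw [smul_eq_mul] at hb2
      constructor
      · rw [← hb2]; exact b.2
      · intro hmem
        have : b = ⟨(a : A) * a0, hmem⟩ := Subtype.ext hb2
        rw [← this, hb1]
    set c : I := ⟨a0 - 1, ha0⟩ with hcdef
    set y : X := x0 - h c with hydef
    have hay : ∀ a : I, h a = (a : A) • y := by
      intro a
      have h1 : (a : A) * a0 ∈ I := (key a).1
      have h2 : h ⟨(a : A) * a0, h1⟩ = (a : A) • x0 := (key a).2 h1
      have h3 : (⟨(a : A) * a0, h1⟩ : I) - (a : A) • c = a := by
        apply Subtype.ext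
        show (a : A) * a0 - (a : A) • (a0 - 1) = (a : A)
        rw [smul_eq_mul, mul_sub, mul_one]
        exact sub_sub_cancel _ _
      calc h a = h ((⟨(a : A) * a0, h1⟩ : I) - (a : A) • c) := by rw [h3]
        _ = (a : A) • x0 - (a : A) • h c := by rw [map_sub, map_smul, h2]
        _ = (a : A) • y := by rw [hydef, smul_sub]
    set Γ' := Γ ⊔ Submodule.span A {((n : N), y)} with hΓ'def
    have hΓ'S : Γ' ∈ S := by
      constructor
      · exact le_trans hΓ0leΓ le_sup_left
      · intro x hx
        rw [hΓ'def, Submodule.mem_sup] at hx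
        obtain ⟨γ, hγ, z, hz, hsum⟩ := hx
        obtain ⟨a, rfl⟩ := Submodule.mem_span_singleton.mp hz
        have hnegγ : (-γ : N × X) = (a • n, a • y - x) := by
          have hγeq : γ = ((0 : N), x) - a • (n, y) := (eq_sub_of_add_eq hsum)
          rw [hγeq, neg_sub, Prod.smul_mk, Prod.mk_sub_mk, sub_zero]
        have hγ2 : ((a • n : N), a • y - x) ∈ Γ := by rw [← hnegγ]; exact Γ.neg_mem hγ
        have haI : a ∈ I := (hImem a).mpr ⟨_, hγ2⟩
        have hxy : ((a • n : N), a • y) ∈ Γ := by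
          have := hh' ⟨a, haI⟩
          rwa [hay ⟨a, haI⟩] at this
        have h0 : ((0 : N), x) ∈ Γ := by
          have := Γ.sub_mem hxy hγ2
          simpa [Prod.mk_sub_mk] using this
        exact hΓfun x h0
    have hle : Γ' ≤ Γ := hΓmax.2 hΓ'S le_sup_left
    exact hn y (hle ((le_sup_right : _ ≤ Γ') (Submodule.mem_span_singleton_self _)))
  obtain ⟨g, hg⟩ := graph_fun A Γ hΓfun htot
  refine ⟨g, ?_⟩
  ext m
  simp only [LinearMap.comp_apply]
  have h1 : ((ψ m : N), f m) ∈ Γ := hΓ0leΓ ⟨m, rfl⟩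
  have h2 := hg (ψ m)
  have h0 : ((0 : N), g (ψ m) - f m) ∈ Γ := by
    have := Γ.sub_mem h2 h1
    simpa [Prod.mk_sub_mk] using this
  exact sub_eq_zero.mp (hΓfun _ h0)


lemma isGClosed_congr {G : Set (Ideal A)} {X Y : Type} [AddCommGroup X] [Module A X]
    [AddCommGroup Y] [Module A Y] (e : X ≃ₗ[A] Y) (hX : IsGClosed A G X) :
    IsGClosed A G Y := by
  intro I hI
  obtain ⟨h1, h2⟩ := hX I hI
  constructor
  · intro f
    have h0 : (e.symm : Y →ₗ[A] X) ∘ₗ f = 0 := h1 _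
    refine LinearMap.ext fun q => ?_
    have := LinearMap.congr_fun h0 q
    simp only [LinearMap.comp_apply, LinearMap.zero_apply, LinearMap.coe_coe] at this ⊢
    exact (LinearEquiv.map_eq_zero_iff e.symm).mp this
  · intro E _ _ i p hi hp hker
    have hrg : LinearMap.range (i ∘ₗ (e : X →ₗ[A] Y)) = LinearMap.range i :=
      LinearMap.range_comp_of_range_eq_top i (LinearMap.range_eq_top.mpr e.surjective)
    obtain ⟨s, hs⟩ := h2 E (i ∘ₗ (e : X →ₗ[A] Y)) p (hi.comp e.injective) hp
      (hker.trans hrg.symm)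
    exact ⟨s, hs⟩


lemma closed_directLimit {J : Type} [Preorder J] [IsDirected J (· ≤ ·)] [DecidableEq J]
    [Nonempty J]
    (G : J → Set (Ideal A)) (hmono : Monotone G) (hfin : ∀ j, GClosedUnderDirectLimits A (G j))
    (MG : J → Type) [∀ j, AddCommGroup (MG j)] [∀ j, Module A (MG j)]
    (t : ∀ i j : J, i ≤ j → MG i →ₗ[A] MG j) [DirectedSystem MG (fun i j h => t i j h)]
    (hcl : ∀ j, IsGClosed A (G j) (MG j)) (j : J) :
    IsGClosed A (G j) (Module.DirectLimit MG t) := by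
  classical
  -- the cofinal subsystem over K = {k // j ≤ k}
  set K := {k : J // j ≤ k} with hKdef
  haveI : IsDirected K (· ≤ ·) := by
    constructor
    intro a b
    obtain ⟨c, hac, hbc⟩ := directed_of (· ≤ ·) a.1 b.1
    exact ⟨⟨c, le_trans a.2 hac⟩, hac, hbc⟩
  haveI : Nonempty K := ⟨⟨j, le_refl j⟩⟩
  set F : K → Type := fun k => MG k.1 with hFdef
  set f : ∀ a b : K, a ≤ b → F a →ₗ[A] F b := fun a b h => t a.1 b.1 h with hfdef
  haveI : DirectedSystem F (fun a b h => f a b h) := by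
    constructor
    · intro a x
      show t a.1 a.1 le_rfl x = x
      exact DirectedSystem.map_self (f := fun i j (h : i ≤ j) => ⇑(t i j h)) x
    · intro c b a hab hbc x
      show t b.1 c.1 hbc (t a.1 b.1 hab x) = t a.1 c.1 (le_trans hab hbc) x
      exact DirectedSystem.map_map (f := fun i j (h : i ≤ j) => ⇑(t i j h)) hab hbc x
  have hclK : ∀ k : K, IsGClosed A (G j) (F k) := fun k I hI => hcl k.1 I (hmono k.2 hI)
  have hL' : IsGClosed A (G j) (Module.DirectLimit F f) := hfin j K F f hclK
  -- the upper bound choice function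
  have hub : ∀ k : J, ∃ u : J, j ≤ u ∧ k ≤ u := fun k => directed_of (· ≤ ·) j k
  set u : J → J := fun k => (hub k).choose with hudef
  have hu1 : ∀ k, j ≤ u k := fun k => (hub k).choose_spec.1
  have hu2 : ∀ k, k ≤ u k := fun k => (hub k).choose_spec.2
  -- the two maps
  set α : Module.DirectLimit F f →ₗ[A] Module.DirectLimit MG t :=
    Module.DirectLimit.lift A K F f (fun k => Module.DirectLimit.of A J MG t k.1)
      (fun a b hab x => Module.DirectLimit.of_f) with hαdef
  have hβcompat : ∀ (a b : J) (hab : a ≤ b) (x : MG a),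
      ((Module.DirectLimit.of A K F f ⟨u b, hu1 b⟩) ∘ₗ t b (u b) (hu2 b)) (t a b hab x) =
      ((Module.DirectLimit.of A K F f ⟨u a, hu1 a⟩) ∘ₗ t a (u a) (hu2 a)) x := by
    intro a b hab x
    obtain ⟨v, hv1, hv2⟩ := directed_of (· ≤ ·) (u a) (u b)
    have hjv : j ≤ v := le_trans (hu1 a) hv1
    simp only [LinearMap.comp_apply]
    have hv1' : (⟨u b, hu1 b⟩ : K) ≤ ⟨v, hjv⟩ := hv2
    have hv2' : (⟨u a, hu1 a⟩ : K) ≤ ⟨v, hjv⟩ := hv1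
    have e1 : Module.DirectLimit.of A K F f ⟨u b, hu1 b⟩ (t b (u b) (hu2 b) (t a b hab x)) =
        Module.DirectLimit.of A K F f ⟨v, hjv⟩
          (f ⟨u b, hu1 b⟩ ⟨v, hjv⟩ hv1' (t b (u b) (hu2 b) (t a b hab x))) :=
      (Module.DirectLimit.of_f (hij := hv1')).symm
    have e2 : Module.DirectLimit.of A K F f ⟨u a, hu1 a⟩ (t a (u a) (hu2 a) x) =
        Module.DirectLimit.of A K F f ⟨v, hjv⟩
          (f ⟨u a, hu1 a⟩ ⟨v, hjv⟩ hv2' (t a (u a) (hu2 a) x)) :=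
      (Module.DirectLimit.of_f (hij := hv2')).symm
    rw [e1, e2]
    congr 1
    show t (u b) v hv1' (t b (u b) (hu2 b) (t a b hab x)) = t (u a) v hv1 (t a (u a) (hu2 a) x)
    simp [DirectedSystem.map_map (f := fun i j (h : i ≤ j) => ⇑(t i j h))]
  set β : Module.DirectLimit MG t →ₗ[A] Module.DirectLimit F f :=
    Module.DirectLimit.lift A J MG t
      (fun k => (Module.DirectLimit.of A K F f ⟨u k, hu1 k⟩) ∘ₗ t k (u k) (hu2 k))
      hβcompat with hβdef
  have hαβ : ∀ z, α (β z) = z := by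
    intro z
    refine Module.DirectLimit.induction_on z ?_
    intro k x
    rw [hβdef, Module.DirectLimit.lift_of]
    simp only [LinearMap.comp_apply]
    rw [hαdef, Module.DirectLimit.lift_of]
    exact Module.DirectLimit.of_f
  have hβα : ∀ z, β (α z) = z := by
    intro z
    refine Module.DirectLimit.induction_on z ?_
    intro k x
    rw [hαdef, Module.DirectLimit.lift_of, hβdef, Module.DirectLimit.lift_of]
    simp only [LinearMap.comp_apply]
    have hk : k ≤ (⟨u k.1, hu1 k.1⟩ : K) := hu2 k.1
    exact Module.DirectLimit.of_f (hij := hk)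
  exact isGClosed_congr A
    (LinearEquiv.ofLinear α β (LinearMap.ext hαβ) (LinearMap.ext hβα)) hL'

/-- Let `G = ⋃ⱼ Gⱼ` be a directed union of Gabriel filters whose Giraud subcategories are
closed under direct limits.  Given, for each `j`, a `Gⱼ`-closed reflection `ψⱼ : M → MGⱼ`
(with `Gⱼ`-torsion kernel and cokernel) forming a directed system, and a `G`-closed
reflection `ψ : M → MG`, the reflection `MG` is canonically isomorphic to the direct
limit of the `MGⱼ`. -/
theorem statement17 {J : Type} [Preorder J] [IsDirected J (· ≤ ·)] [DecidableEq J]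
    [Nonempty J]
    (G : J → Set (Ideal A)) (hGab : ∀ j, IsGabrielFilter A (G j)) (hmono : Monotone G)
    (hfin : ∀ j, GClosedUnderDirectLimits A (G j))
    (M : Type) [AddCommGroup M] [Module A M]
    (MG : J → Type) [∀ j, AddCommGroup (MG j)] [∀ j, Module A (MG j)]
    (t : ∀ i j : J, i ≤ j → MG i →ₗ[A] MG j) [DirectedSystem MG (fun i j h => t i j h)]
    (ψ : ∀ j, M →ₗ[A] MG j)
    (hcompat : ∀ (i j : J) (h : i ≤ j), (t i j h) ∘ₗ ψ i = ψ j)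
    (hrefl : ∀ j, IsGClosed A (G j) (MG j) ∧
      IsGTorsion A (G j) (LinearMap.ker (ψ j)) ∧
      IsGTorsion A (G j) (MG j ⧸ LinearMap.range (ψ j)))
    (MGinf : Type) [AddCommGroup MGinf] [Module A MGinf] (ψinf : M →ₗ[A] MGinf)
    (hreflinf : IsGClosed A (⋃ j, G j) MGinf ∧
      IsGTorsion A (⋃ j, G j) (LinearMap.ker ψinf) ∧
      IsGTorsion A (⋃ j, G j) (MGinf ⧸ LinearMap.range ψinf)) :
    ∃ e : MGinf ≃ₗ[A] Module.DirectLimit MG t,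
      ∀ j, (e : MGinf →ₗ[A] Module.DirectLimit MG t) ∘ₗ ψinf =
        (Module.DirectLimit.of A J MG t j) ∘ₗ ψ j := by
  classical
  set L := Module.DirectLimit MG t with hLdef
  set Gt := ⋃ j, G j with hGtdef
  have hup : ∀ I I' : Ideal A, I ∈ Gt → I ≤ I' → I' ∈ Gt := by
    intro I I' hI hII'
    obtain ⟨j, hIj⟩ := Set.mem_iUnion.mp hI
    exact Set.mem_iUnion.mpr ⟨j, (hGab j).2.1 _ _ hIj hII'⟩
  have j0 : J := Classical.arbitrary J
  set φ : M →ₗ[A] L := (Module.DirectLimit.of A J MG t j0) ∘ₗ ψ j0 with hφdef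
  have hφj : ∀ j, (Module.DirectLimit.of A J MG t j) ∘ₗ ψ j = φ := by
    intro j
    have e1 : ∀ (a k : J) (hak : a ≤ k), (Module.DirectLimit.of A J MG t a) ∘ₗ ψ a
        = (Module.DirectLimit.of A J MG t k) ∘ₗ ψ k := by
      intro a k hak
      rw [← hcompat a k hak]
      ext m
      simp only [LinearMap.comp_apply]
      exact (Module.DirectLimit.of_f (hij := hak)).symm
    obtain ⟨k, h0k, hjk⟩ := directed_of (· ≤ ·) j0 j
    rw [e1 j k hjk, hφdef, e1 j0 k h0k]
  -- torsion of ker φ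
  have hkerφ : IsGTorsion A Gt (LinearMap.ker φ) := by
    intro m
    have hm : Module.DirectLimit.of A J MG t j0 (ψ j0 (m : M)) = 0 := m.2
    obtain ⟨k, h0k, hk⟩ := Module.DirectLimit.of.zero_exact hm
    have hψk : ψ k (m : M) = 0 := by
      rw [← LinearMap.congr_fun (hcompat j0 k h0k) (m : M)]
      exact hk
    refine Set.mem_iUnion.mpr ⟨k, ?_⟩
    have hann := (hrefl k).2.1 ⟨(m : M), hψk⟩
    have hset : LinearMap.ker (LinearMap.toSpanSingleton A (LinearMap.ker φ) m)
        = LinearMap.ker (LinearMap.toSpanSingleton A (LinearMap.ker (ψ k)) ⟨(m : M), hψk⟩) := by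
      ext a
      simp only [LinearMap.mem_ker, LinearMap.toSpanSingleton_apply]
      constructor <;> intro ha <;>
        exact Subtype.ext (by simpa using congrArg Subtype.val ha)
    rw [hset]
    exact hann
  -- torsion of coker φ
  have hcokφ : IsGTorsion A Gt (L ⧸ LinearMap.range φ) := by
    intro q
    obtain ⟨z, rfl⟩ := Submodule.Quotient.mk_surjective _ q
    obtain ⟨k, x, rfl⟩ := Module.DirectLimit.exists_of z
    refine Set.mem_iUnion.mpr ⟨k, ?_⟩
    have hIk := (hrefl k).2.2 (Submodule.Quotient.mk x)
    refine (hGab k).2.1 _ _ hIk ?_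
    intro a ha
    rw [LinearMap.mem_ker, LinearMap.toSpanSingleton_apply] at ha ⊢
    rw [← Submodule.Quotient.mk_smul, Submodule.Quotient.mk_eq_zero] at ha ⊢
    obtain ⟨m, hm⟩ := ha
    refine ⟨m, ?_⟩
    rw [← hφj k]
    simp only [LinearMap.comp_apply]
    rw [hm, map_smul]
  -- L is Gt-closed
  have hLclosed : IsGClosed A Gt L := by
    intro I hI
    obtain ⟨j, hIj⟩ := Set.mem_iUnion.mp hI
    exact closed_directLimit A G hmono hfin MG t (fun j => (hrefl j).1) j I hIj
  have hLtf : ∀ x : L, LinearMap.ker (LinearMap.toSpanSingleton A L x) ∈ Gt → x = 0 :=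
    fun x hx => tf_of_closed A (fun I hI => (hLclosed I hI).1) hx
  have hMtf : ∀ x : MGinf, LinearMap.ker (LinearMap.toSpanSingleton A MGinf x) ∈ Gt → x = 0 :=
    fun x hx => tf_of_closed A (fun I hI => (hreflinf.1 I hI).1) hx
  obtain ⟨g, hg⟩ := extend_hom A hup ψinf hreflinf.2.1 hreflinf.2.2 hLclosed φ
  obtain ⟨g', hg'⟩ := extend_hom A hup φ hkerφ hcokφ hreflinf.1 ψinf
  have hgg' : g' ∘ₗ g = LinearMap.id := by
    apply unique_hom A hup ψinf hreflinf.2.2 hMtf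
    rw [LinearMap.comp_assoc, hg, hg', LinearMap.id_comp]
  have hg'g : g ∘ₗ g' = LinearMap.id := by
    apply unique_hom A hup φ hcokφ hLtf
    rw [LinearMap.comp_assoc, hg', hg, LinearMap.id_comp]
  refine ⟨LinearEquiv.ofLinear g g' hg'g hgg', ?_⟩
  intro j
  rw [hφj j]
  exact hg


end
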